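/- Let Ω ⊆ ℝ^d be open and bounded, p ∈ (1,∞), and let 𝟙 denote the constant function equal to 1. For μ_n, μ ∈ P_p(Ω), the sequence μ_n converges weakly-* to μ (i.e., ∫ φ dμ_n → ∫ φ dμ for every bounded continuous φ : Ω → ℝ) if and only if d_TLp((μ_n, 𝟙), (μ, 𝟙)) → 0. -/

import Mathlib

/-!
With constant functions `𝟙` the TL^p distance is the `p`-th root of the optimal transport cost
for `c x y = ‖x - y‖ₚ ^ p`, and all measures live on the compact set `K = closure Ω`, on which `c`
is comparable to `dist ^ p`.

If the cost tends to zero, a cheap coupling `π` of `μₙ` and `μ` gives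
`|∫ φ ∂μₙ - ∫ φ ∂μ| ≤ ∫ |φ x - φ y| ∂π ≤ ε + C ∫ c ∂π`, because `φ` is uniformly continuous on `K`
and bounded. Conversely, take a partition of unity `(ψᵢ)` on `K` subordinate to small balls:
coupling `ψᵢ • μₙ` with `ψᵢ • μ` cell by cell is cheap, and the leftover mass, at most
`∑ᵢ |∫ ψᵢ ∂μₙ - ∫ ψᵢ ∂μ|`, tends to zero by weak convergence and is coupled at bounded cost.
-/

open MeasureTheory Filter Topology

/-- `∑ i, |v i|^p`, the p-th power of the ℓ^p norm on ℝ^k. -/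
noncomputable def lpPow (p : ℝ) {k : ℕ} (v : Fin k → ℝ) : ℝ := ∑ i, |v i| ^ p

/-- `π` is a coupling (transport plan) between `μ` and `ν`. -/
def IsCoupling {α β : Type*} [MeasurableSpace α] [MeasurableSpace β]
    (π : Measure (α × β)) (μ : Measure α) (ν : Measure β) : Prop :=
  π.map Prod.fst = μ ∧ π.map Prod.snd = ν

/-- The Kantorovich optimal transport cost for a cost function `c`. -/
noncomputable def OTCost {α β : Type*} [MeasurableSpace α] [MeasurableSpace β]
    (c : α → β → ℝ) (μ : Measure α) (ν : Measure β) : ℝ :=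
  ⨅ π : {π : Measure (α × β) // IsCoupling π μ ν},
    ∫ z, c z.1 z.2 ∂(π : Measure (α × β))

/-- The TL^p distance between `(μ, f)` and `(ν, g)`. -/
noncomputable def dTLp (p : ℝ) {d m : ℕ} (μ ν : Measure (Fin d → ℝ))
    (f g : (Fin d → ℝ) → Fin m → ℝ) : ℝ :=
  (OTCost (fun x y => lpPow p (x - y) + lpPow p (f x - g y)) μ ν) ^ (1 / p)

open scoped ENNReal BoundedContinuousFunction
open Set Function Metric

lemma ENNReal.inv_max_mul_mul {a b : ℝ≥0∞} (ha : a ≠ ⊤) (hb : b ≠ ⊤) :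
    (max a b)⁻¹ * (a * b) = min a b := by
  wlog h : a ≤ b generalizing a b
  · rw [max_comm, min_comm, mul_comm a]
    exact this hb ha (le_of_not_ge h)
  rw [max_eq_right h, min_eq_left h]
  rcases eq_or_ne b 0 with rfl | hb0
  · simp [le_zero_iff.1 h]
  · rw [mul_comm a, ← mul_assoc, ENNReal.inv_mul_cancel hb0 hb, one_mul]

lemma Finset.one_sub_sum_min_le_sum_abs_sub {ι : Type*} {s : Finset ι} {a b : ι → ℝ}
    (ha : ∑ i ∈ s, a i = 1) : 1 - ∑ i ∈ s, min (a i) (b i) ≤ ∑ i ∈ s, |a i - b i| := by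
  rw [← ha, ← Finset.sum_sub_distrib]
  refine Finset.sum_le_sum fun i _ => ?_
  rcases le_total (a i) (b i) with h | h
  · rw [min_eq_left h, sub_self]
    exact abs_nonneg _
  · rw [min_eq_right h]
    exact le_abs_self _

lemma Real.tendsto_rpow_one_div_nhds_zero_iff {ι : Type*} {l : Filter ι} {f : ι → ℝ}
    (hf : ∀ i, 0 ≤ f i) {p : ℝ} (hp : 0 < p) :
    Tendsto (fun i => f i ^ (1 / p)) l (𝓝 0) ↔ Tendsto f l (𝓝 0) := by
  refine ⟨fun h => ?_, fun h => ?_⟩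
  · have hf' : (fun i => (f i ^ (1 / p)) ^ p) = f := funext fun i => by
      rw [← Real.rpow_mul (hf i), one_div_mul_cancel hp.ne', Real.rpow_one]
    have := h.rpow_const (p := p) (Or.inr hp.le)
    rwa [hf', Real.zero_rpow hp.ne'] at this
  · have := h.rpow_const (p := 1 / p) (Or.inr (one_div_pos.2 hp).le)
    rwa [Real.zero_rpow (one_div_pos.2 hp).ne'] at this

lemma integral_le_measureReal_mul {γ : Type*} [MeasurableSpace γ] {m : Measure γ}
    [IsFiniteMeasure m] {f : γ → ℝ} (hf : Integrable f m) {M : ℝ} (hM : ∀ᵐ z ∂m, f z ≤ M) :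
    ∫ z, f z ∂m ≤ m.real univ * M := by
  simpa [integral_const] using integral_mono_ae hf (integrable_const M) hM

section Coupling
variable {α β : Type*} [MeasurableSpace α] [MeasurableSpace β]
  {π : Measure (α × β)} {μ : Measure α} {ν : Measure β}

lemma IsCoupling.add {π' : Measure (α × β)} {μ' : Measure α} {ν' : Measure β}
    (h : IsCoupling π μ ν) (h' : IsCoupling π' μ' ν') : IsCoupling (π + π') (μ + μ') (ν + ν') :=
  ⟨by rw [Measure.map_add _ _ measurable_fst, h.1, h'.1],
    by rw [Measure.map_add _ _ measurable_snd, h.2, h'.2]⟩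

lemma IsCoupling.measure_univ (h : IsCoupling π μ ν) : π univ = μ univ := by
  rw [← h.1, Measure.map_apply measurable_fst .univ, preimage_univ]

lemma IsCoupling.isFiniteMeasure [IsFiniteMeasure μ] (h : IsCoupling π μ ν) :
    IsFiniteMeasure π :=
  ⟨by rw [h.measure_univ]; exact measure_lt_top μ univ⟩

lemma IsCoupling.ae_mem (h : IsCoupling π μ ν) {s : Set α} {t : Set β} (hs : μ sᶜ = 0)
    (ht : ν tᶜ = 0) : ∀ᵐ z ∂π, z.1 ∈ s ∧ z.2 ∈ t := by
  have h₁ : ∀ᵐ x ∂π.map Prod.fst, x ∈ s := h.1 ▸ hs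
  have h₂ : ∀ᵐ y ∂π.map Prod.snd, y ∈ t := h.2 ▸ ht
  exact (ae_of_ae_map measurable_fst.aemeasurable h₁).and
    (ae_of_ae_map measurable_snd.aemeasurable h₂)

lemma isCoupling_inv_smul_prod [IsFiniteMeasure μ] [IsFiniteMeasure ν] (h : μ univ = ν univ) :
    IsCoupling ((μ univ)⁻¹ • μ.prod ν) μ ν := by
  rcases eq_or_ne (μ univ) 0 with h0 | h0
  · obtain rfl : μ = 0 := Measure.measure_univ_eq_zero.1 h0
    obtain rfl : ν = 0 := Measure.measure_univ_eq_zero.1 (h.symm.trans h0)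
    simp [IsCoupling]
  · have hμ : (μ univ)⁻¹ * μ univ = 1 := ENNReal.inv_mul_cancel h0 (measure_ne_top μ univ)
    constructor
    · rw [Measure.map_smul, Measure.map_fst_prod, smul_smul, ← h, hμ, one_smul]
    · rw [Measure.map_smul, Measure.map_snd_prod, smul_smul, hμ, one_smul]

lemma isCoupling_prod [IsProbabilityMeasure μ] [IsProbabilityMeasure ν] :
    IsCoupling (μ.prod ν) μ ν := by
  simpa using isCoupling_inv_smul_prod (μ := μ) (ν := ν) (by simp)

variable {c : α → β → ℝ}

lemma OTCost_nonneg (hc : ∀ x y, 0 ≤ c x y) : 0 ≤ OTCost c μ ν :=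
  Real.iInf_nonneg fun _ => integral_nonneg fun z => hc z.1 z.2

lemma OTCost_le_integral (hc : ∀ x y, 0 ≤ c x y) (hπ : IsCoupling π μ ν) :
    OTCost c μ ν ≤ ∫ z, c z.1 z.2 ∂π := by
  refine ciInf_le ⟨0, ?_⟩ (⟨π, hπ⟩ : {π // IsCoupling π μ ν})
  rintro _ ⟨π', rfl⟩
  exact integral_nonneg fun z => hc z.1 z.2

lemma exists_isCoupling_integral_lt [IsProbabilityMeasure μ] [IsProbabilityMeasure ν] {a : ℝ}
    (h : OTCost c μ ν < a) : ∃ π, IsCoupling π μ ν ∧ ∫ z, c z.1 z.2 ∂π < a := by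
  have : Nonempty {π // IsCoupling π μ ν} := ⟨⟨_, isCoupling_prod⟩⟩
  obtain ⟨⟨π, hπ⟩, hlt⟩ := exists_lt_of_ciInf_lt h
  exact ⟨π, hπ, hlt⟩

lemma IsCoupling.integrable_cost [IsFiniteMeasure μ] (hπ : IsCoupling π μ ν)
    (hc0 : ∀ x y, 0 ≤ c x y) (hcm : Measurable (uncurry c)) {s : Set α} {t : Set β}
    (hs : μ sᶜ = 0) (ht : ν tᶜ = 0) {R : ℝ} (hR : ∀ x ∈ s, ∀ y ∈ t, c x y ≤ R) :
    Integrable (fun z => c z.1 z.2) π :=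
  have := hπ.isFiniteMeasure
  (integrable_const R).mono' hcm.aestronglyMeasurable <| (hπ.ae_mem hs ht).mono fun _ hz => by
    rw [Real.norm_of_nonneg (hc0 _ _)]
    exact hR _ hz.1 _ hz.2

theorem OTCost_le_of_map_le [IsProbabilityMeasure μ] [IsProbabilityMeasure ν]
    (hc0 : ∀ x y, 0 ≤ c x y) (hcm : Measurable (uncurry c)) {s : Set α} {t : Set β}
    (hs : μ sᶜ = 0) (ht : ν tᶜ = 0) {R : ℝ} (hR : ∀ x ∈ s, ∀ y ∈ t, c x y ≤ R)
    {κ : Measure (α × β)} [IsFiniteMeasure κ] (hκ₁ : κ.map Prod.fst ≤ μ)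
    (hκ₂ : κ.map Prod.snd ≤ ν) {δ : ℝ} (hδ : ∀ᵐ z ∂κ, c z.1 z.2 ≤ δ) :
    OTCost c μ ν ≤ δ * κ.real univ + R * (1 - κ.real univ) := by
  set ρ := μ - κ.map Prod.fst
  set σ := ν - κ.map Prod.snd
  have hκ : κ univ ≤ 1 := by
    simpa [Measure.map_apply measurable_fst MeasurableSet.univ] using hκ₁ univ
  have hρ : ρ univ = 1 - κ univ := by
    rw [Measure.sub_apply .univ hκ₁, measure_univ, Measure.map_apply measurable_fst .univ,
      preimage_univ]
  have hσ : σ univ = 1 - κ univ := by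
    rw [Measure.sub_apply .univ hκ₂, measure_univ, Measure.map_apply measurable_snd .univ,
      preimage_univ]
  have hrest : IsCoupling ((ρ univ)⁻¹ • ρ.prod σ) ρ σ := isCoupling_inv_smul_prod (hρ.trans hσ.symm)
  have hcoup : IsCoupling (κ + (ρ univ)⁻¹ • ρ.prod σ) μ ν := by
    have := (show IsCoupling κ (κ.map Prod.fst) (κ.map Prod.snd) from ⟨rfl, rfl⟩).add hrest
    rwa [add_comm (κ.map _), Measure.sub_add_cancel_of_le hκ₁, add_comm (κ.map _),
      Measure.sub_add_cancel_of_le hκ₂] at this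
  have hint := hcoup.integrable_cost hc0 hcm hs ht hR
  have hρs : ρ sᶜ = 0 := Measure.absolutelyContinuous_of_le Measure.sub_le hs
  have hσt : σ tᶜ = 0 := Measure.absolutelyContinuous_of_le Measure.sub_le ht
  have hmass : ((ρ univ)⁻¹ • ρ.prod σ).real univ = 1 - κ.real univ := by
    rw [measureReal_def, hrest.measure_univ, hρ, ENNReal.toReal_sub_of_le hκ ENNReal.one_ne_top,
      ENNReal.toReal_one, measureReal_def]
  calc OTCost c μ ν ≤ ∫ z, c z.1 z.2 ∂(κ + (ρ univ)⁻¹ • ρ.prod σ) := OTCost_le_integral hc0 hcoup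
    _ = ∫ z, c z.1 z.2 ∂κ + ∫ z, c z.1 z.2 ∂((ρ univ)⁻¹ • ρ.prod σ) :=
      integral_add_measure hint.left_of_add_measure hint.right_of_add_measure
    _ ≤ κ.real univ * δ + ((ρ univ)⁻¹ • ρ.prod σ).real univ * R := by
      have := hrest.isFiniteMeasure
      gcongr
      · exact integral_le_measureReal_mul hint.left_of_add_measure hδ
      · exact integral_le_measureReal_mul hint.right_of_add_measure <|
          (hrest.ae_mem hρs hσt).mono fun _ hz => hR _ hz.1 _ hz.2
    _ = δ * κ.real univ + R * (1 - κ.real univ) := by rw [hmass]; ring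

end Coupling

section CellCoupling
variable {α β ι : Type*} [MeasurableSpace α] [MeasurableSpace β]
  {μ : ι → Measure α} {ν : ι → Measure β}

noncomputable def cellCoupling (μ : ι → Measure α) (ν : ι → Measure β) : Measure (α × β) :=
  Measure.sum fun i => (max (μ i univ) (ν i univ))⁻¹ • (μ i).prod (ν i)

lemma map_fst_cellCoupling_le [∀ i, SFinite (ν i)] :
    (cellCoupling μ ν).map Prod.fst ≤ Measure.sum μ := by
  rw [cellCoupling, Measure.map_sum measurable_fst.aemeasurable]
  refine Measure.le_iff.2 fun s hs => ?_
  rw [Measure.sum_apply _ hs, Measure.sum_apply _ hs]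
  refine ENNReal.tsum_le_tsum fun i => ?_
  rw [Measure.map_smul, Measure.map_fst_prod, smul_smul, Measure.smul_apply, smul_eq_mul]
  refine mul_le_of_le_one_left' <|
    le_trans ?_ (ENNReal.inv_mul_le_one (max (μ i univ) (ν i univ)))
  gcongr
  exact le_max_right _ _

lemma map_snd_cellCoupling_le [∀ i, SFinite (ν i)] :
    (cellCoupling μ ν).map Prod.snd ≤ Measure.sum ν := by
  rw [cellCoupling, Measure.map_sum measurable_snd.aemeasurable]
  refine Measure.le_iff.2 fun s hs => ?_
  rw [Measure.sum_apply _ hs, Measure.sum_apply _ hs]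
  refine ENNReal.tsum_le_tsum fun i => ?_
  rw [Measure.map_smul, Measure.map_snd_prod, smul_smul, Measure.smul_apply, smul_eq_mul]
  refine mul_le_of_le_one_left' <|
    le_trans ?_ (ENNReal.inv_mul_le_one (max (μ i univ) (ν i univ)))
  gcongr
  exact le_max_left _ _

lemma cellCoupling_apply_univ [Fintype ι] [∀ i, IsFiniteMeasure (μ i)]
    [∀ i, IsFiniteMeasure (ν i)] :
    cellCoupling μ ν univ = ∑ i, min (μ i univ) (ν i univ) := by
  rw [cellCoupling, Measure.sum_apply _ .univ, tsum_fintype]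
  refine Finset.sum_congr rfl fun i _ => ?_
  rw [Measure.smul_apply, smul_eq_mul, ← univ_prod_univ, Measure.prod_prod,
    ENNReal.inv_max_mul_mul (measure_ne_top _ _) (measure_ne_top _ _)]

instance [Fintype ι] [∀ i, IsFiniteMeasure (μ i)] [∀ i, IsFiniteMeasure (ν i)] :
    IsFiniteMeasure (cellCoupling μ ν) :=
  ⟨by simp [cellCoupling_apply_univ, min_lt_of_left_lt (measure_lt_top _ _)]⟩

lemma ae_cellCoupling [Countable ι] {p : α × β → Prop}
    (h : ∀ i, ∀ᵐ z ∂(μ i).prod (ν i), p z) :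
    ∀ᵐ z ∂cellCoupling μ ν, p z :=
  Measure.ae_sum_iff.2 fun i => Measure.ae_smul_measure (h i) _

end CellCoupling

section PartitionOfUnity
variable {α ι : Type*} [TopologicalSpace α] [MeasurableSpace α] [OpensMeasurableSpace α]
  {K : Set α} (ψ : PartitionOfUnity ι α K) (μ : Measure α)

lemma PartitionOfUnity.integrable [IsFiniteMeasure μ] (i : ι) : Integrable (ψ i) μ :=
  (integrable_const (1 : ℝ)).mono' (ψ i).continuous.aestronglyMeasurable <| ae_of_all _ fun x => by
    rw [Real.norm_of_nonneg (ψ.nonneg i x)]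
    exact ψ.le_one i x

lemma PartitionOfUnity.sum_integral_eq_one [Fintype ι] [IsProbabilityMeasure μ]
    (hμ : μ Kᶜ = 0) :
    ∑ i, ∫ x, ψ i x ∂μ = 1 := by
  have hsum : ∀ᵐ x ∂μ, ∑ i, ψ i x = 1 := (show ∀ᵐ x ∂μ, x ∈ K from hμ).mono fun x hx => by
    simpa [finsum_eq_sum_of_fintype] using ψ.sum_eq_one hx
  rw [← integral_finsetSum _ fun i _ => ψ.integrable μ i, integral_congr_ae hsum]
  simp

lemma PartitionOfUnity.sum_withDensity_le [Fintype ι] :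
    Measure.sum (fun i => μ.withDensity fun x => ENNReal.ofReal (ψ i x)) ≤ μ := by
  rw [← withDensity_tsum fun i => (ψ i).continuous.measurable.ennreal_ofReal]
  conv_rhs => rw [← withDensity_one (μ := μ)]
  refine withDensity_mono (ae_of_all _ fun x => ?_)
  rw [tsum_fintype, Finset.sum_apply, Pi.one_apply,
    ← ENNReal.ofReal_sum_of_nonneg fun i _ => ψ.nonneg i x, ← ENNReal.ofReal_one]
  exact ENNReal.ofReal_le_ofReal (by simpa [finsum_eq_sum_of_fintype] using ψ.sum_le_one x)

lemma PartitionOfUnity.withDensity_apply_univ [IsFiniteMeasure μ] (i : ι) :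
    (μ.withDensity fun x => ENNReal.ofReal (ψ i x)) univ = ENNReal.ofReal (∫ x, ψ i x ∂μ) := by
  rw [withDensity_apply _ .univ, Measure.restrict_univ,
    ofReal_integral_eq_lintegral_ofReal (ψ.integrable μ i) (ae_of_all _ (ψ.nonneg i))]

lemma PartitionOfUnity.ae_withDensity (hμ : μ Kᶜ = 0) (i : ι) :
    ∀ᵐ x ∂μ.withDensity (fun x => ENNReal.ofReal (ψ i x)), x ∈ K ∧ ψ i x ≠ 0 :=
  (ae_withDensity_iff (ψ i).continuous.measurable.ennreal_ofReal).2 <|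
    (show ∀ᵐ x ∂μ, x ∈ K from hμ).mono fun x hx hψ =>
      ⟨hx, fun h => hψ (by simp [h])⟩

variable {μ}

theorem OTCost_le_of_partitionOfUnity [Fintype ι] {c : α → α → ℝ} (hc0 : ∀ x y, 0 ≤ c x y)
    (hcm : Measurable (uncurry c)) {ν : Measure α} [IsProbabilityMeasure μ]
    [IsProbabilityMeasure ν] (hμ : μ Kᶜ = 0) (hν : ν Kᶜ = 0) {R : ℝ} (hR0 : 0 ≤ R)
    (hR : ∀ x ∈ K, ∀ y ∈ K, c x y ≤ R) {δ : ℝ} (hδ0 : 0 ≤ δ)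
    (hδ : ∀ i, ∀ x ∈ K, ∀ y ∈ K, ψ i x ≠ 0 → ψ i y ≠ 0 → c x y ≤ δ) :
    OTCost c μ ν ≤ δ + R * ∑ i, |∫ x, ψ i x ∂μ - ∫ x, ψ i x ∂ν| := by
  set μi := fun i => μ.withDensity fun x => ENNReal.ofReal (ψ i x)
  set νi := fun i => ν.withDensity fun x => ENNReal.ofReal (ψ i x)
  have : ∀ i, IsFiniteMeasure (μi i) := fun i =>
    isFiniteMeasure_of_le μ ((Measure.le_sum μi i).trans (ψ.sum_withDensity_le μ))
  have : ∀ i, IsFiniteMeasure (νi i) := fun i =>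
    isFiniteMeasure_of_le ν ((Measure.le_sum νi i).trans (ψ.sum_withDensity_le ν))
  have hcell : ∀ i, ∀ᵐ z ∂(μi i).prod (νi i), c z.1 z.2 ≤ δ := fun i => by
    filter_upwards [Measure.quasiMeasurePreserving_fst.ae (ψ.ae_withDensity μ hμ i),
      Measure.quasiMeasurePreserving_snd.ae (ψ.ae_withDensity ν hν i)] with z hz₁ hz₂
    exact hδ i _ hz₁.1 _ hz₂.1 hz₁.2 hz₂.2
  have hbound := OTCost_le_of_map_le hc0 hcm hμ hν hR
    (map_fst_cellCoupling_le.trans (ψ.sum_withDensity_le μ))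
    (map_snd_cellCoupling_le.trans (ψ.sum_withDensity_le ν)) (ae_cellCoupling hcell)
  have hmass : (cellCoupling μi νi).real univ = ∑ i, min (∫ x, ψ i x ∂μ) (∫ x, ψ i x ∂ν) := by
    rw [measureReal_def, cellCoupling_apply_univ,
      ENNReal.toReal_sum fun i _ => (min_lt_of_left_lt (measure_lt_top _ _)).ne]
    refine Finset.sum_congr rfl fun i _ => ?_
    rw [ENNReal.toReal_min (measure_ne_top _ _) (measure_ne_top _ _), ψ.withDensity_apply_univ,
      ψ.withDensity_apply_univ, ENNReal.toReal_ofReal (integral_nonneg (ψ.nonneg i)),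
      ENNReal.toReal_ofReal (integral_nonneg (ψ.nonneg i))]
  have hle : (cellCoupling μi νi).real univ ≤ 1 := by
    rw [hmass, ← ψ.sum_integral_eq_one μ hμ]
    exact Finset.sum_le_sum fun i _ => min_le_left _ _
  have hdefect : 1 - (cellCoupling μi νi).real univ ≤ ∑ i, |∫ x, ψ i x ∂μ - ∫ x, ψ i x ∂ν| :=
    hmass ▸ Finset.one_sub_sum_min_le_sum_abs_sub (ψ.sum_integral_eq_one μ hμ)
  exact hbound.trans <|
    add_le_add (mul_le_of_le_one_right hδ0 hle) (mul_le_mul_of_nonneg_left hdefect hR0)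

end PartitionOfUnity

lemma abs_integral_sub_le_of_isCoupling {α : Type*} [MeasurableSpace α] {c : α → α → ℝ}
    {μ ν : Measure α} [IsProbabilityMeasure μ] {π : Measure (α × α)} (hπ : IsCoupling π μ ν)
    {f : α → ℝ} (hfμ : Integrable f μ) (hfν : Integrable f ν)
    (hc : Integrable (fun z => c z.1 z.2) π) {ε C : ℝ}
    (hf : ∀ᵐ z ∂π, |f z.1 - f z.2| ≤ ε + C * c z.1 z.2) :
    |∫ x, f x ∂μ - ∫ x, f x ∂ν| ≤ ε + C * ∫ z, c z.1 z.2 ∂π := by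
  have : IsProbabilityMeasure π := ⟨by rw [hπ.measure_univ, measure_univ]⟩
  have h₁ : Integrable (fun z : α × α => f z.1) π :=
    (hπ.1 ▸ hfμ).comp_aemeasurable measurable_fst.aemeasurable
  have h₂ : Integrable (fun z : α × α => f z.2) π :=
    (hπ.2 ▸ hfν).comp_aemeasurable measurable_snd.aemeasurable
  calc |∫ x, f x ∂μ - ∫ x, f x ∂ν| = |∫ z, (f z.1 - f z.2) ∂π| := by
        rw [integral_sub h₁ h₂, ← hπ.1, ← hπ.2,
          integral_map measurable_fst.aemeasurable (hπ.1 ▸ hfμ).aestronglyMeasurable,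
          integral_map measurable_snd.aemeasurable (hπ.2 ▸ hfν).aestronglyMeasurable]
    _ ≤ ∫ z, |f z.1 - f z.2| ∂π := abs_integral_le_integral_abs
    _ ≤ ∫ z, (ε + C * c z.1 z.2) ∂π :=
        integral_mono_ae (h₁.sub h₂).abs ((integrable_const ε).add (hc.const_mul C)) hf
    _ = ε + C * ∫ z, c z.1 z.2 ∂π := by
        rw [integral_add (integrable_const ε) (hc.const_mul C), integral_const, integral_const_mul]
        simp

section WeakConvergence
variable {α : Type*} [MetricSpace α] [MeasurableSpace α] [OpensMeasurableSpace α]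
  {c : α → α → ℝ} {K : Set α} {μs : ℕ → Measure α} {μ : Measure α}
  [∀ n, IsProbabilityMeasure (μs n)] [IsProbabilityMeasure μ]

theorem tendsto_integral_of_tendsto_OTCost (hK : IsCompact K) (hc0 : ∀ x y, 0 ≤ c x y)
    (hcm : Measurable (uncurry c)) {R : ℝ} (hR : ∀ x ∈ K, ∀ y ∈ K, c x y ≤ R)
    (hsep : ∀ δ > 0, ∃ η > 0, ∀ x ∈ K, ∀ y ∈ K, δ ≤ dist x y → η ≤ c x y)
    (hμs : ∀ n, μs n Kᶜ = 0) (hμ : μ Kᶜ = 0)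
    (h : Tendsto (fun n => OTCost c (μs n) μ) atTop (𝓝 0)) (φ : α →ᵇ ℝ) :
    Tendsto (fun n => ∫ x, φ x ∂μs n) atTop (𝓝 (∫ x, φ x ∂μ)) := by
  refine Metric.tendsto_nhds.2 fun ε hε => ?_
  obtain ⟨δ, hδ, hφδ⟩ := Metric.uniformContinuousOn_iff.1
    (hK.uniformContinuousOn_of_continuous φ.continuous.continuousOn) (ε / 2) (half_pos hε)
  obtain ⟨η, hη, hcη⟩ := hsep δ hδ
  set C := 2 * ‖φ‖ / η
  have hC : 0 ≤ C := by positivity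
  have hpt : ∀ x ∈ K, ∀ y ∈ K, |φ x - φ y| ≤ ε / 2 + C * c x y := by
    intro x hx y hy
    rcases lt_or_ge (dist x y) δ with hxy | hxy
    · have := (Real.dist_eq _ _ ▸ hφδ x hx y hy hxy).le
      nlinarith [mul_nonneg hC (hc0 x y)]
    · calc |φ x - φ y| ≤ 2 * ‖φ‖ := Real.dist_eq (φ x) (φ y) ▸ φ.dist_le_two_norm x y
        _ = C * η := (div_mul_cancel₀ _ hη.ne').symm
        _ ≤ C * c x y := by gcongr; exact hcη x hx y hy hxy
        _ ≤ ε / 2 + C * c x y := by linarith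
  have hsmall : C * (ε / 2 / (C + 1)) < ε / 2 := by
    rw [mul_div_assoc', div_lt_iff₀ (by positivity)]
    nlinarith
  filter_upwards [h.eventually (gt_mem_nhds (show 0 < ε / 2 / (C + 1) by positivity))] with n hn
  obtain ⟨π, hπ, hπc⟩ := exists_isCoupling_integral_lt hn
  have hdiff := abs_integral_sub_le_of_isCoupling hπ (φ.integrable _) (φ.integrable _)
    (hπ.integrable_cost hc0 hcm (hμs n) hμ hR)
    ((hπ.ae_mem (hμs n) hμ).mono fun _ hz => hpt _ hz.1 _ hz.2)
  rw [Real.dist_eq]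
  calc _ ≤ ε / 2 + C * ∫ z, c z.1 z.2 ∂π := hdiff
    _ ≤ ε / 2 + C * (ε / 2 / (C + 1)) := by gcongr
    _ < ε := by linarith

theorem tendsto_OTCost_of_tendsto_integral (hK : IsCompact K) (hc0 : ∀ x y, 0 ≤ c x y)
    (hcm : Measurable (uncurry c)) {R : ℝ} (hR0 : 0 ≤ R) (hR : ∀ x ∈ K, ∀ y ∈ K, c x y ≤ R)
    (hdiag : ∀ ε > 0, ∃ r > 0, ∀ x ∈ K, ∀ y ∈ K, dist x y < r → c x y ≤ ε)
    (hμs : ∀ n, μs n Kᶜ = 0) (hμ : μ Kᶜ = 0)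
    (h : ∀ φ : α →ᵇ ℝ, Tendsto (fun n => ∫ x, φ x ∂μs n) atTop (𝓝 (∫ x, φ x ∂μ))) :
    Tendsto (fun n => OTCost c (μs n) μ) atTop (𝓝 0) := by
  refine Metric.tendsto_nhds.2 fun ε hε => ?_
  obtain ⟨r, hr, hcr⟩ := hdiag (ε / 2) (half_pos hε)
  obtain ⟨t, htK⟩ := hK.elim_finite_subcover (fun x : K => ball (x : α) (r / 2))
    (fun _ => isOpen_ball) fun x hx => mem_iUnion.2 ⟨⟨x, hx⟩, mem_ball_self (half_pos hr)⟩
  obtain ⟨ψ, hψ⟩ := PartitionOfUnity.exists_isSubordinate hK.isClosed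
    (fun i : t => ball ((i : K) : α) (r / 2)) (fun _ => isOpen_ball) fun x hx => by
      obtain ⟨i, hi, hxi⟩ := mem_iUnion₂.1 (htK hx)
      exact mem_iUnion.2 ⟨⟨i, hi⟩, hxi⟩
  have hcell : ∀ i, ∀ x ∈ K, ∀ y ∈ K, ψ i x ≠ 0 → ψ i y ≠ 0 → c x y ≤ ε / 2 := by
    intro i x hx y hy hψx hψy
    have hxi : dist x ((i : K) : α) < r / 2 := hψ i (subset_tsupport _ hψx)
    have hyi : dist y ((i : K) : α) < r / 2 := hψ i (subset_tsupport _ hψy)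
    exact hcr x hx y hy ((dist_triangle_right x y _).trans_lt (by linarith))
  have hmass : ∀ i, Tendsto (fun n => ∫ x, ψ i x ∂μs n) atTop (𝓝 (∫ x, ψ i x ∂μ)) := fun i =>
    h (.mkOfBound (ψ i) 1 fun x y => by
      rw [Real.dist_eq, abs_sub_le_iff]
      constructor <;> linarith [ψ.nonneg i x, ψ.nonneg i y, ψ.le_one i x, ψ.le_one i y])
  have hdefect : Tendsto (fun n => R * ∑ i, |∫ x, ψ i x ∂μs n - ∫ x, ψ i x ∂μ|) atTop (𝓝 0) := by
    simpa using (tendsto_finsetSum _ fun i _ =>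
      ((hmass i).sub_const (∫ x, ψ i x ∂μ)).abs).const_mul R
  filter_upwards [hdefect.eventually (gt_mem_nhds (half_pos hε))] with n hn
  rw [Real.dist_eq, sub_zero, abs_of_nonneg (OTCost_nonneg hc0)]
  calc OTCost c (μs n) μ ≤ ε / 2 + R * ∑ i, |∫ x, ψ i x ∂μs n - ∫ x, ψ i x ∂μ| :=
        OTCost_le_of_partitionOfUnity ψ hc0 hcm (hμs n) hμ hR0 hR (half_pos hε).le hcell
    _ < ε := by linarith

end WeakConvergence

section TLp
variable {d : ℕ} {p : ℝ}

lemma lpPow_zero (hp : p ≠ 0) : lpPow p (0 : Fin d → ℝ) = 0 := by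
  simp [lpPow, Real.zero_rpow hp]

lemma lpPow_nonneg (v : Fin d → ℝ) : 0 ≤ lpPow p v :=
  Finset.sum_nonneg fun _ _ => Real.rpow_nonneg (abs_nonneg _) _

lemma continuous_lpPow (hp : 0 ≤ p) : Continuous (lpPow p : (Fin d → ℝ) → ℝ) :=
  continuous_finsetSum _ fun i _ => (continuous_apply i).abs.rpow_const fun _ => Or.inr hp

lemma dist_rpow_le_lpPow_sub (hp : 0 < p) (x y : Fin d → ℝ) :
    dist x y ^ p ≤ lpPow p (x - y) := by
  rcases (dist_nonneg : 0 ≤ dist x y).eq_or_lt with h | h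
  · rw [← h, Real.zero_rpow hp.ne']
    exact lpPow_nonneg _
  by_contra! hlt
  refine lt_irrefl (dist x y) ((dist_pi_lt_iff h).2 fun i => ?_)
  have hi : |x i - y i| ^ p < dist x y ^ p :=
    (Finset.single_le_sum (fun j _ => Real.rpow_nonneg (abs_nonneg ((x - y) j)) p)
      (Finset.mem_univ i)).trans_lt hlt
  rw [Real.dist_eq]
  exact (Real.rpow_lt_rpow_iff (abs_nonneg _) h.le hp).1 hi

lemma lpPow_sub_le_mul_dist_rpow (hp : 0 ≤ p) (x y : Fin d → ℝ) :
    lpPow p (x - y) ≤ d * dist x y ^ p :=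
  calc lpPow p (x - y) ≤ ∑ _i : Fin d, dist x y ^ p := Finset.sum_le_sum fun i _ =>
        Real.rpow_le_rpow (abs_nonneg _) (by simpa [Real.dist_eq] using dist_le_pi_dist x y i) hp
    _ = d * dist x y ^ p := by simp

lemma exists_pos_forall_dist_lt_lpPow_sub_le (hp : 0 < p) {ε : ℝ} (hε : 0 < ε) :
    ∃ r > 0, ∀ x y : Fin d → ℝ, dist x y < r → lpPow p (x - y) ≤ ε := by
  have hcont : Tendsto (fun t : ℝ => d * t ^ p) (𝓝 0) (𝓝 0) := by
    simpa [Real.zero_rpow hp.ne'] using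
      ((Real.continuous_rpow_const hp.le).tendsto 0).const_mul (d : ℝ)
  obtain ⟨r, hr, hball⟩ := Metric.eventually_nhds_iff.1 (hcont.eventually (ge_mem_nhds hε))
  refine ⟨r, hr, fun x y hxy => (lpPow_sub_le_mul_dist_rpow hp.le x y).trans (hball ?_)⟩
  rwa [Real.dist_eq, sub_zero, abs_of_nonneg dist_nonneg]

lemma exists_pos_forall_le_dist_le_lpPow_sub (hp : 0 < p) {δ : ℝ} (hδ : 0 < δ) :
    ∃ η > 0, ∀ x y : Fin d → ℝ, δ ≤ dist x y → η ≤ lpPow p (x - y) :=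
  ⟨δ ^ p, Real.rpow_pos_of_pos hδ p, fun x y h =>
    (Real.rpow_le_rpow hδ.le h hp.le).trans (dist_rpow_le_lpPow_sub hp x y)⟩

lemma dTLp_const {m : ℕ} (hp : p ≠ 0) (μ ν : Measure (Fin d → ℝ)) (v : Fin m → ℝ) :
    dTLp p μ ν (fun _ => v) (fun _ => v) = OTCost (fun x y => lpPow p (x - y)) μ ν ^ (1 / p) := by
  simp only [dTLp, sub_self, lpPow_zero hp, add_zero]

end TLp

theorem weakstar_iff_tlp_of_const_one_general {d m : ℕ} (Ω : Set (Fin d → ℝ))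
    (hΩb : Bornology.IsBounded Ω) (p : ℝ) (hp1 : 1 < p)
    (μseq : ℕ → Measure (Fin d → ℝ)) (μ : Measure (Fin d → ℝ))
    (hμseq : ∀ n, IsProbabilityMeasure (μseq n)) (hμ : IsProbabilityMeasure μ)
    (hμseqΩ : ∀ n, μseq n Ωᶜ = 0) (hμΩ : μ Ωᶜ = 0) :
    (∀ φ : BoundedContinuousFunction (Fin d → ℝ) ℝ,
        Tendsto (fun n => ∫ x, φ x ∂(μseq n)) atTop (𝓝 (∫ x, φ x ∂μ)))
      ↔ Tendsto (fun n => dTLp p (μseq n) μ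
          (fun _ => fun _ : Fin m => (1 : ℝ)) (fun _ => fun _ : Fin m => (1 : ℝ)))
          atTop (𝓝 0) := by
  have hp : 0 < p := zero_lt_one.trans hp1
  have hK : IsCompact (closure Ω) := hΩb.isCompact_closure
  have hμseqK n : μseq n (closure Ω)ᶜ = 0 :=
    measure_mono_null (compl_subset_compl.2 subset_closure) (hμseqΩ n)
  have hμK : μ (closure Ω)ᶜ = 0 := measure_mono_null (compl_subset_compl.2 subset_closure) hμΩ
  have hc0 (x y : Fin d → ℝ) : 0 ≤ lpPow p (x - y) := lpPow_nonneg _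
  have hcm : Measurable (uncurry fun x y : Fin d → ℝ => lpPow p (x - y)) :=
    ((continuous_lpPow hp.le).comp (continuous_fst.sub continuous_snd)).measurable
  have hR : ∀ x ∈ closure Ω, ∀ y ∈ closure Ω, lpPow p (x - y) ≤ d * diam (closure Ω) ^ p :=
    fun x hx y hy => (lpPow_sub_le_mul_dist_rpow hp.le x y).trans <| by
      gcongr
      exact dist_le_diam_of_mem hK.isBounded hx hy
  simp_rw [dTLp_const hp.ne',
    Real.tendsto_rpow_one_div_nhds_zero_iff (fun _ => OTCost_nonneg hc0) hp]
  refine ⟨tendsto_OTCost_of_tendsto_integral hK hc0 hcm (by positivity) hR (fun ε hε => ?_)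
      hμseqK hμK,
    fun h => tendsto_integral_of_tendsto_OTCost hK hc0 hcm hR (fun δ hδ => ?_) hμseqK hμK h⟩
  · obtain ⟨r, hr, h⟩ := exists_pos_forall_dist_lt_lpPow_sub_le hp hε (d := d)
    exact ⟨r, hr, fun x _ y _ => h x y⟩
  · obtain ⟨η, hη, h⟩ := exists_pos_forall_le_dist_le_lpPow_sub hp hδ (d := d)
    exact ⟨η, hη, fun x _ y _ => h x y⟩

/-- `μ_n` converges weakly-* to `μ` if and only if
`d_TLp((μ_n, 𝟙), (μ, 𝟙)) → 0`, where `𝟙` is the constant function `1`. -/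
theorem weakstar_iff_tlp_of_const_one {d m : ℕ} (Ω : Set (Fin d → ℝ)) (hΩo : IsOpen Ω)
    (hΩb : Bornology.IsBounded Ω) (p : ℝ) (hp1 : 1 < p)
    (μseq : ℕ → Measure (Fin d → ℝ)) (μ : Measure (Fin d → ℝ))
    (hμseq : ∀ n, IsProbabilityMeasure (μseq n)) (hμ : IsProbabilityMeasure μ)
    (hμseqΩ : ∀ n, μseq n Ωᶜ = 0) (hμΩ : μ Ωᶜ = 0) :
    (∀ φ : BoundedContinuousFunction (Fin d → ℝ) ℝ,
        Tendsto (fun n => ∫ x, φ x ∂(μseq n)) atTop (𝓝 (∫ x, φ x ∂μ)))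
      ↔ Tendsto (fun n => dTLp p (μseq n) μ
          (fun _ => fun _ : Fin m => (1 : ℝ)) (fun _ => fun _ : Fin m => (1 : ℝ)))
          atTop (𝓝 0) :=
  weakstar_iff_tlp_of_const_one_general Ω hΩb p hp1 μseq μ hμseq hμ hμseqΩ hμΩ
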